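/- arXiv:2511.00912 — 2 statements merged into one kernel-verified Lean document; each statement's English description precedes it below -/
import Mathlib

section
/- Let 𝔐 = (M, ⊨, P(L)) be an abstract model structure with L infinite. If spECQ-sat holds in 𝔐, then there exists φ ∈ L such that {φ} is not satisfiable, and pfECQ-sat holds in 𝔐. Moreover, if every Γ ⊊ L that is satisfiable is also finitely satisfiable, then the converse holds: if there exists φ ∈ L with {φ} not satisfiable and pfECQ-sat holds in 𝔐, then spECQ-sat holds in 𝔐. -/
open Set

/-- A set `Γ ⊆ L` is satisfiable in the amst given by `sat` if some model satisfies it. -/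
def AmstSatisfiable {M L : Type*} (sat : M → Set L → Prop) (Γ : Set L) : Prop :=
  ∃ m : M, sat m Γ

/-- `Γ` is finitely satisfiable if every finite subset of `Γ` is satisfiable. -/
def AmstFinSatisfiable {M L : Type*} (sat : M → Set L → Prop) (Γ : Set L) : Prop :=
  ∀ Δ : Set L, Δ ⊆ Γ → Δ.Finite → AmstSatisfiable sat Δ

/-- An amst is compact if satisfiability and finite satisfiability coincide. -/
def AmstCompact {M L : Type*} (sat : M → Set L → Prop) : Prop :=
  ∀ Γ : Set L, AmstSatisfiable sat Γ ↔ AmstFinSatisfiable sat Γ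

/-- `ModOf sat Γ` is the set of models satisfying `Γ`. -/
def ModOf {M L : Type*} (sat : M → Set L → Prop) (Γ : Set L) : Set M :=
  {m : M | sat m Γ}

/-- The consequence relation of the logical structure induced by the amst:
`Γ ⊢ α` iff `Mod(Γ) ⊆ Mod({α})`. -/
def Entails {M L : Type*} (sat : M → Set L → Prop) (Γ : Set L) (α : L) : Prop :=
  ModOf sat Γ ⊆ ModOf sat ({α} : Set L)

/-- A logical structure (given by its consequence relation) is finitary. -/
def IsFinitary {L : Type*} (turn : Set L → L → Prop) : Prop :=
  ∀ (Γ : Set L) (α : L), turn Γ α → ∃ Γ' : Set L, Γ' ⊆ Γ ∧ Γ'.Finite ∧ turn Γ' α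

/-- An amst is normal if satisfaction of a set is equivalent to satisfaction of
each of its singletons. -/
def AmstNormal {M L : Type*} (sat : M → Set L → Prop) : Prop :=
  ∀ (m : M) (Γ : Set L), sat m Γ ↔ ∀ α ∈ Γ, sat m ({α} : Set L)

/-- The anti-model structure relative to `Λ`: domain `M \ Mod(Λ)`, satisfaction restricted. -/
def AntiSat {M L : Type*} (sat : M → Set L → Prop) (Λ : Set L) :
    {m : M // m ∉ ModOf sat Λ} → Set L → Prop :=
  fun m Γ => sat m.1 Γ

/-- A set is explosive (trivial) in a logical structure if it entails everything. -/
def IsExplosive {L : Type*} (turn : Set L → L → Prop) (Γ : Set L) : Prop :=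
  ∀ γ : L, turn Γ γ

/-- gECQ for a logical structure. -/
def GECQ {L : Type*} (turn : Set L → L → Prop) : Prop :=
  ∀ α : L, ∃ β : L, IsExplosive turn ({α, β} : Set L)

/-- sECQ for a logical structure. -/
def SECQ {L : Type*} (turn : Set L → L → Prop) : Prop :=
  ∀ α : L, ∃ Γ : Set L, Γ ∪ {α} ≠ univ ∧ IsExplosive turn (Γ ∪ {α})

/-- spECQ for a logical structure. -/
def SPECQ {L : Type*} (turn : Set L → L → Prop) : Prop :=
  ∀ Γ : Set L, Γ ≠ univ → ∃ α : L, Γ ∪ {α} ≠ univ ∧ IsExplosive turn (Γ ∪ {α})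

/-- pfECQ for a logical structure. -/
def PFECQ {L : Type*} (turn : Set L → L → Prop) : Prop :=
  ∀ Γ : Set L, Γ ≠ univ → ∃ Δ : Set L, Δ ≠ univ ∧ Γ ⊆ Δ ∧ IsExplosive turn Δ

/-- gECQ-sat for an amst. -/
def GECQsat {M L : Type*} (sat : M → Set L → Prop) : Prop :=
  ∀ α : L, ∃ β : L, ¬ AmstSatisfiable sat ({α, β} : Set L)

/-- sECQ-sat for an amst. -/
def SECQsat {M L : Type*} (sat : M → Set L → Prop) : Prop :=
  ∀ α : L, ∃ Γ : Set L, Γ ∪ {α} ≠ univ ∧ ¬ AmstSatisfiable sat (Γ ∪ {α})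

/-- spECQ-sat for an amst. -/
def SPECQsat {M L : Type*} (sat : M → Set L → Prop) : Prop :=
  ∀ Γ : Set L, Γ ≠ univ → ∃ α : L, Γ ∪ {α} ≠ univ ∧ ¬ AmstSatisfiable sat (Γ ∪ {α})

/-- pfECQ-sat for an amst. -/
def PFECQsat {M L : Type*} (sat : M → Set L → Prop) : Prop :=
  ∀ Γ : Set L, Γ ≠ univ → ∃ Δ : Set L, Δ ≠ univ ∧ Γ ⊆ Δ ∧ ¬ AmstSatisfiable sat Δ

/-- gECQ-finsat for an amst. -/
def GECQfinsat {M L : Type*} (sat : M → Set L → Prop) : Prop :=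
  ∀ α : L, ∃ β : L, ¬ AmstFinSatisfiable sat ({α, β} : Set L)

/-- sECQ-finsat for an amst. -/
def SECQfinsat {M L : Type*} (sat : M → Set L → Prop) : Prop :=
  ∀ α : L, ∃ Γ : Set L, Γ ∪ {α} ≠ univ ∧ ¬ AmstFinSatisfiable sat (Γ ∪ {α})

/-- spECQ-finsat for an amst. -/
def SPECQfinsat {M L : Type*} (sat : M → Set L → Prop) : Prop :=
  ∀ Γ : Set L, Γ ≠ univ → ∃ α : L, Γ ∪ {α} ≠ univ ∧ ¬ AmstFinSatisfiable sat (Γ ∪ {α})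

/-- pfECQ-finsat for an amst. -/
def PFECQfinsat {M L : Type*} (sat : M → Set L → Prop) : Prop :=
  ∀ Γ : Set L, Γ ≠ univ → ∃ Δ : Set L, Δ ≠ univ ∧ Γ ⊆ Δ ∧ ¬ AmstFinSatisfiable sat Δ

/-- `Σ'` is satisfiable relative to a collection `K` of subsets of `L` if every
subset of `Σ'` belonging to `K` is satisfiable. -/
def KSatisfiable {M L : Type*} (sat : M → Set L → Prop) (K : Set (Set L)) (S : Set L) : Prop :=
  ∀ Δ : Set L, Δ ⊆ S → Δ ∈ K → AmstSatisfiable sat Δ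

/-- The principal ultrafilter on `I` generated by `s` (as a family of subsets of `I`). -/
def PrincipalUF {L : Type*} (I : Set L) (s : L) : Set (Set L) :=
  {X : Set L | X ⊆ I ∧ s ∈ X}

/-! The forward direction instantiates spECQ-sat at `∅` and at `Γ` itself. For the converse, given
an unsatisfiable `{φ}` and a proper `Γ`: if `Γ ∪ {φ}` is still proper, finite satisfiability
forbids it from being satisfiable, as it contains `{φ}`; otherwise `Γ = L \ {φ}` is a coatom, so
the only proper superset that pfECQ-sat can offer is `Γ` itself, and any `α ∈ Γ` works. -/

namespace Set

theorem eq_of_union_singleton_eq_univ {L : Type*} {Γ Δ : Set L} {φ : L}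
    (hΓφ : Γ ∪ {φ} = univ) (hΓΔ : Γ ⊆ Δ) (hΔ : Δ ≠ univ) : Δ = Γ := by
  refine hΓΔ.antisymm' fun x hx => ?_
  rcases (hΓφ ▸ mem_univ x : x ∈ Γ ∪ {φ}) with hxΓ | rfl
  · exact hxΓ
  · exact absurd (univ_subset_iff.mp (hΓφ ▸ union_subset hΓΔ (singleton_subset_iff.mpr hx))) hΔ

theorem Nonempty.of_union_singleton_eq_univ {L : Type*} [Nontrivial L] {Γ : Set L} {φ : L}
    (hΓφ : Γ ∪ {φ} = univ) : Γ.Nonempty := by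
  obtain ⟨a, ha⟩ := exists_ne φ
  exact ⟨a, (hΓφ ▸ mem_univ a : a ∈ Γ ∪ {φ}).resolve_right ha⟩

end Set

section Amst

variable {M L : Type*} {sat : M → Set L → Prop}

theorem SPECQsat.exists_not_amstSatisfiable_singleton [Nonempty L] (h : SPECQsat sat) :
    ∃ φ : L, ¬ AmstSatisfiable sat ({φ} : Set L) := by
  obtain ⟨φ, -, hφ⟩ := h ∅ empty_ne_univ
  exact ⟨φ, by rwa [empty_union] at hφ⟩

theorem SPECQsat.pfecqSat (h : SPECQsat sat) : PFECQsat sat := fun Γ hΓ =>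
  let ⟨α, hne, hα⟩ := h Γ hΓ
  ⟨Γ ∪ {α}, hne, subset_union_left, hα⟩

theorem not_amstSatisfiable_of_subset
    (hfin : ∀ Γ : Set L, Γ ≠ univ → AmstSatisfiable sat Γ → AmstFinSatisfiable sat Γ)
    {Γ Δ : Set L} (hΔ : ¬ AmstSatisfiable sat Δ) (hΔfin : Δ.Finite) (hΔΓ : Δ ⊆ Γ)
    (hΓ : Γ ≠ univ) : ¬ AmstSatisfiable sat Γ :=
  fun hsat => hΔ (hfin Γ hΓ hsat Δ hΔΓ hΔfin)

theorem PFECQsat.not_amstSatisfiable_of_union_singleton_eq_univ (h : PFECQsat sat)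
    {Γ : Set L} {φ : L} (hΓ : Γ ≠ univ) (hΓφ : Γ ∪ {φ} = univ) : ¬ AmstSatisfiable sat Γ := by
  obtain ⟨Δ, hΔ, hΓΔ, hunsat⟩ := h Γ hΓ
  rwa [← eq_of_union_singleton_eq_univ hΓφ hΓΔ hΔ]

theorem PFECQsat.specqSat [Nontrivial L]
    (hfin : ∀ Γ : Set L, Γ ≠ univ → AmstSatisfiable sat Γ → AmstFinSatisfiable sat Γ)
    {φ : L} (hφ : ¬ AmstSatisfiable sat ({φ} : Set L)) (h : PFECQsat sat) : SPECQsat sat := by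
  intro Γ hΓ
  by_cases hΓφ : Γ ∪ {φ} = univ
  · obtain ⟨α, hα⟩ := Nonempty.of_union_singleton_eq_univ hΓφ
    refine ⟨α, ?_⟩
    rw [union_eq_self_of_subset_right (singleton_subset_iff.mpr hα)]
    exact ⟨hΓ, h.not_amstSatisfiable_of_union_singleton_eq_univ hΓ hΓφ⟩
  · exact ⟨φ, hΓφ, not_amstSatisfiable_of_subset hfin hφ (finite_singleton φ)
      subset_union_right hΓφ⟩

end Amst

theorem specqSat_iff_pfecqSat_general {M L : Type*} [Infinite L]
    (sat : M → Set L → Prop) :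
    (SPECQsat sat →
      (∃ φ : L, ¬ AmstSatisfiable sat ({φ} : Set L)) ∧ PFECQsat sat) ∧
    ((∀ Γ : Set L, Γ ≠ univ → AmstSatisfiable sat Γ → AmstFinSatisfiable sat Γ) →
      ((∃ φ : L, ¬ AmstSatisfiable sat ({φ} : Set L)) ∧ PFECQsat sat →
        SPECQsat sat)) :=
  ⟨fun h => ⟨h.exists_not_amstSatisfiable_singleton, h.pfecqSat⟩,
    fun hfin ⟨⟨_, hφ⟩, hpf⟩ => hpf.specqSat hfin hφ⟩

/-- spECQ-sat implies the existence of an unsatisfiable singleton together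
with pfECQ-sat; and conversely, provided every satisfiable proper subset is finitely
satisfiable. -/
theorem specqSat_iff_pfecqSat {M L : Type*} [Nonempty M] [Infinite L]
    (sat : M → Set L → Prop) :
    (SPECQsat sat →
      (∃ φ : L, ¬ AmstSatisfiable sat ({φ} : Set L)) ∧ PFECQsat sat) ∧
    ((∀ Γ : Set L, Γ ≠ univ → AmstSatisfiable sat Γ → AmstFinSatisfiable sat Γ) →
      ((∃ φ : L, ¬ AmstSatisfiable sat ({φ} : Set L)) ∧ PFECQsat sat →
        SPECQsat sat)) :=
  specqSat_iff_pfecqSat_general sat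
end

section
/- Let 𝔐 = (M, ⊨, P(L)) be an abstract model structure with L infinite. Then spECQ-finsat holds in 𝔐 if and only if pfECQ-finsat holds in 𝔐 and there exists φ ∈ L such that {φ} is not finitely satisfiable. -/
open Set

/-! Given spECQ-finsat, the witness for `Γ = ∅` yields a non-finitely-satisfiable singleton,
and `Γ ∪ {α}` serves as the extension required by pfECQ-finsat. Conversely, let `{φ}` be
non-finitely-satisfiable and `Γ ≠ L`. If `Γ ∪ {φ} ≠ L`, then `α = φ` works. Otherwise `Γ = L \ {φ}`
has no extension other than itself and `L`, so pfECQ-finsat says that `Γ` itself is not finitely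
satisfiable, and any `α ∈ Γ` works; such an `α` exists because `L` has a second element. -/

section

variable {M L : Type*} {sat : M → Set L → Prop}

theorem AmstFinSatisfiable.mono {Γ Δ : Set L} (hΔ : AmstFinSatisfiable sat Δ) (hΓΔ : Γ ⊆ Δ) :
    AmstFinSatisfiable sat Γ :=
  fun Θ hΘ hfin => hΔ Θ (hΘ.trans hΓΔ) hfin

theorem PFECQfinsat.of_SPECQfinsat (h : SPECQfinsat sat) : PFECQfinsat sat := by
  intro Γ hΓ
  obtain ⟨α, hne, hns⟩ := h Γ hΓ
  exact ⟨Γ ∪ {α}, hne, subset_union_left, hns⟩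

theorem SPECQfinsat.exists_not_amstFinSatisfiable_singleton [Nonempty L] (h : SPECQfinsat sat) :
    ∃ φ : L, ¬ AmstFinSatisfiable sat ({φ} : Set L) := by
  obtain ⟨φ, -, hns⟩ := h ∅ empty_ne_univ
  exact ⟨φ, by simpa using hns⟩

theorem eq_of_subset_of_union_singleton_eq_univ {Γ Δ : Set L} {φ : L} (hu : Γ ∪ {φ} = univ)
    (hΓΔ : Γ ⊆ Δ) (hΔ : Δ ≠ univ) : Δ = Γ := by
  have hφΔ : φ ∉ Δ := fun hφ =>
    hΔ (eq_univ_of_univ_subset (hu ▸ union_subset hΓΔ (singleton_subset_iff.mpr hφ)))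
  refine Subset.antisymm ?_ hΓΔ
  intro x hx
  have hx' : x ∈ Γ ∪ {φ} := hu ▸ mem_univ x
  exact hx'.resolve_right (by rintro rfl; exact hφΔ hx)

theorem nonempty_of_union_singleton_eq_univ [Nontrivial L] {Γ : Set L} {φ : L}
    (hu : Γ ∪ {φ} = univ) : Γ.Nonempty := by
  obtain ⟨x, hxφ⟩ := exists_ne φ
  have hx : x ∈ Γ ∪ {φ} := hu ▸ mem_univ x
  exact ⟨x, hx.resolve_right hxφ⟩

theorem SPECQfinsat.of_PFECQfinsat [Nontrivial L] (hpf : PFECQfinsat sat) {φ : L}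
    (hφ : ¬ AmstFinSatisfiable sat ({φ} : Set L)) : SPECQfinsat sat := by
  intro Γ hΓ
  by_cases hu : Γ ∪ {φ} = univ
  · obtain ⟨Δ, hΔ, hΓΔ, hΔns⟩ := hpf Γ hΓ
    obtain ⟨x, hx⟩ := nonempty_of_union_singleton_eq_univ hu
    have hΓx : Γ ∪ {x} = Γ := union_eq_self_of_subset_right (singleton_subset_iff.mpr hx)
    rw [eq_of_subset_of_union_singleton_eq_univ hu hΓΔ hΔ] at hΔns
    refine ⟨x, ?_, ?_⟩ <;> rw [hΓx]
    · exact hΓ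
    · exact hΔns
  · exact ⟨φ, hu, fun hfs => hφ (hfs.mono subset_union_right)⟩

end

theorem specqFinsat_iff_general {M L : Type*} [Infinite L]
    (sat : M → Set L → Prop) :
    SPECQfinsat sat ↔
      (PFECQfinsat sat ∧
        ∃ φ : L, ¬ AmstFinSatisfiable sat ({φ} : Set L)) := by
  constructor
  · intro h
    exact ⟨.of_SPECQfinsat h, h.exists_not_amstFinSatisfiable_singleton⟩
  · rintro ⟨hpf, φ, hφ⟩
    exact .of_PFECQfinsat hpf hφ

/-- characterization of spECQ-finsat. -/
theorem specqFinsat_iff {M L : Type*} [Nonempty M] [Infinite L]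
    (sat : M → Set L → Prop) :
    SPECQfinsat sat ↔
      (PFECQfinsat sat ∧
        ∃ φ : L, ¬ AmstFinSatisfiable sat ({φ} : Set L)) :=
  specqFinsat_iff_general sat
end
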